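/- arXiv:2011.06890 — 2 statements merged into one kernel-verified Lean document; each statement's English description precedes it below -/
import Mathlib

section
/- Let M_u and L_u be integers with 0 < L_u < M_u, let S be a nonnegative integer (the number of bits per constellation symbol), and set η = L_u/M_u, I = ⌊log₂ C(M_u, L_u)⌋ (where C(M_u,L_u) is the binomial coefficient), R_u = I + L_u·S and R̄ = R_u/M_u. Then there exists a real constant C with C_d < C ≤ C_u, where C_d = log₂(π/(2e⁴)) − log₂(η − η²) and C_u = log₂(e²/(4π²)) − log₂(η − η²), such that R̄ = η·S + H₂(η) + (C − log₂ M_u)/(2 M_u). -/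
/-!
With `C := 2 (I - M H₂(η)) + log₂ M` the rate identity is pure algebra, so only the bounds on `C`
need proof. Stirling's bounds `√(2πn) (n/e)ⁿ ≤ n! ≤ e √n (n/e)ⁿ`, applied to the three factorials
of `C(M, L)`, place `2 log₂ C(M, L) - 2 M H₂(η) + log₂ (M η (1 - η))` in
`[log₂ (2π/e⁴), log₂ (e²/(4π²))]`. Replacing `log₂ C(M, L)` by its floor `I` lowers this by less
than `2 = log₂ 4`, which turns `2π/e⁴` into `π/(2e⁴)`.
-/

open Real

/-- Binary entropy function (base-2 logarithm). -/
noncomputable def binEntropy2 (p : ℝ) : ℝ :=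
  -p * Real.logb 2 p - (1 - p) * Real.logb 2 (1 - p)

open scoped Nat

namespace Stirling

theorem stirlingSeq_le_stirlingSeq_one {n : ℕ} (hn : n ≠ 0) : stirlingSeq n ≤ stirlingSeq 1 := by
  obtain ⟨m, rfl⟩ := Nat.exists_eq_succ_of_ne_zero hn
  exact stirlingSeq'_antitone (Nat.zero_le m)

theorem factorial_le_stirling {n : ℕ} (hn : n ≠ 0) :
    (n ! : ℝ) ≤ exp 1 * √n * (n / exp 1) ^ n := by
  have h := stirlingSeq_le_stirlingSeq_one hn
  rw [stirlingSeq_one, stirlingSeq, div_le_iff₀ (by positivity)] at h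
  refine h.trans_eq ?_
  rw [sqrt_mul' _ (Nat.cast_nonneg n)]
  field_simp

theorem log_factorial_le_stirling {n : ℕ} (hn : n ≠ 0) :
    log n ! ≤ n * log n - n + log n / 2 + 1 := by
  calc
    log n ! ≤ log (exp 1 * √n * (n / exp 1) ^ n) :=
      log_le_log (by positivity) (factorial_le_stirling hn)
    _ = n * log n - n + log n / 2 + 1 := by
      rw [log_mul (by positivity) (by positivity), log_mul (by positivity) (by positivity),
        log_sqrt (Nat.cast_nonneg n), log_pow, log_div (by positivity) (by positivity), log_exp]
      ring

end Stirling

theorem log_choose_add_eq (L K : ℕ) :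
    log ((L + K).choose L) = log (L + K)! - log L ! - log K ! := by
  have h := Nat.choose_mul_factorial_mul_factorial (Nat.le_add_right L K)
  rw [Nat.add_sub_cancel_left] at h
  have hchoose : ((L + K).choose L : ℝ) ≠ 0 := by
    exact_mod_cast (Nat.choose_pos (Nat.le_add_right L K)).ne'
  rw [← h, Nat.cast_mul, Nat.cast_mul, log_mul (by positivity) (by positivity),
    log_mul hchoose (by positivity)]
  ring

theorem log_choose_add_mem_Icc {L K : ℕ} (hL : L ≠ 0) (hK : K ≠ 0) :
    2 * log ((L + K).choose L) - 2 * ((L + K) * log (L + K) - L * log L - K * log K)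
        + log (L * K / (L + K)) ∈
      Set.Icc (log (2 * π / exp 1 ^ 4)) (log (exp 1 ^ 2 / (4 * π ^ 2))) := by
  have hLK : L + K ≠ 0 := by omega
  have hM_lower := Stirling.le_log_factorial_stirling hLK
  have hM_upper := Stirling.log_factorial_le_stirling hLK
  have hL_lower := Stirling.le_log_factorial_stirling hL
  have hL_upper := Stirling.log_factorial_le_stirling hL
  have hK_lower := Stirling.le_log_factorial_stirling hK
  have hK_upper := Stirling.log_factorial_le_stirling hK
  push_cast at hM_lower hM_upper
  have hL0 : (0 : ℝ) < L := by positivity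
  have hK0 : (0 : ℝ) < K := by positivity
  have h_ratio : log (L * K / (L + K)) = log L + log K - log (L + K) := by
    rw [log_div (by positivity) (by positivity), log_mul hL0.ne' hK0.ne']
  have h_low_const : log (2 * π / exp 1 ^ 4) = log (2 * π) - 4 := by
    rw [log_div (by positivity) (by positivity), log_pow, log_exp]
    ring
  have h_up_const : log (exp 1 ^ 2 / (4 * π ^ 2)) = 2 - 2 * log (2 * π) := by
    rw [log_div (by positivity) (by positivity), log_pow, log_exp,
      show 4 * π ^ 2 = (2 * π) ^ 2 by ring, log_pow]
    ring
  rw [log_choose_add_eq, h_ratio, h_low_const, h_up_const, Set.mem_Icc]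
  constructor <;> linarith

theorem mul_binEntropy2_div_add {L K : ℝ} (hL : 0 < L) (hK : 0 < K) :
    (L + K) * binEntropy2 (L / (L + K)) =
      ((L + K) * log (L + K) - L * log L - K * log K) / log 2 := by
  have h_compl : 1 - L / (L + K) = K / (L + K) := by field_simp; ring
  rw [binEntropy2, h_compl, logb, logb, log_div hL.ne' (by positivity),
    log_div hK.ne' (by positivity)]
  field_simp
  ring

theorem logb_choose_add_mem_Icc {L K : ℕ} (hL : L ≠ 0) (hK : K ≠ 0) {η : ℝ}
    (hη : η = L / (L + K)) :
    2 * logb 2 ((L + K).choose L) - 2 * (L + K) * binEntropy2 η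
        + logb 2 (L + K) + logb 2 (η - η ^ 2) ∈
      Set.Icc (logb 2 (2 * π / exp 1 ^ 4)) (logb 2 (exp 1 ^ 2 / (4 * π ^ 2))) := by
  have hL0 : (0 : ℝ) < L := by positivity
  have hK0 : (0 : ℝ) < K := by positivity
  have h_var : η - η ^ 2 = L * K / (L + K) ^ 2 := by rw [hη]; field_simp; ring
  have h_to_log : 2 * logb 2 ((L + K).choose L) - 2 * (L + K) * binEntropy2 η
      + logb 2 (L + K) + logb 2 (η - η ^ 2) =
      (2 * log ((L + K).choose L) - 2 * ((L + K) * log (L + K) - L * log L - K * log K)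
        + log (L * K / (L + K))) / log 2 := by
    rw [h_var, mul_assoc, hη, mul_binEntropy2_div_add hL0 hK0]
    simp only [logb]
    rw [log_div (by positivity) (by positivity), log_div (by positivity) (by positivity),
      log_pow]
    field_simp
    ring
  obtain ⟨h_lower, h_upper⟩ := log_choose_add_mem_Icc hL hK
  rw [h_to_log, logb, logb]
  exact ⟨div_le_div_of_nonneg_right h_lower (log_nonneg one_le_two),
    div_le_div_of_nonneg_right h_upper (log_nonneg one_le_two)⟩

/-- **Theorem 1** (per-antenna transmit rate of MA-SM).
For `0 < L_u < M_u`, activity ratio `η = L_u/M_u`, index-modulation rate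
`I = ⌊log₂ C(M_u, L_u)⌋`, per-user rate `R_u = I + L_u·S` and per-antenna rate
`R̄ = R_u/M_u`, there exists a constant `C ∈ (C_d, C_u]` such that
`R̄ = η·S + H₂(η) + (C − log₂ M_u)/(2 M_u)`. -/
theorem per_antenna_rate (Mu Lu S : ℕ) (hL : 0 < Lu) (hM : Lu < Mu)
    (η : ℝ) (hη : η = (Lu : ℝ) / (Mu : ℝ))
    (I : ℤ) (hI : I = ⌊Real.logb 2 ((Mu.choose Lu : ℕ) : ℝ)⌋)
    (Ru : ℝ) (hRu : Ru = (I : ℝ) + (Lu : ℝ) * (S : ℝ))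
    (Rbar : ℝ) (hRbar : Rbar = Ru / (Mu : ℝ))
    (Cd Cu : ℝ)
    (hCd : Cd = Real.logb 2 (Real.pi / (2 * Real.exp 1 ^ 4)) - Real.logb 2 (η - η ^ 2))
    (hCu : Cu = Real.logb 2 (Real.exp 1 ^ 2 / (4 * Real.pi ^ 2)) - Real.logb 2 (η - η ^ 2)) :
    ∃ C : ℝ, Cd < C ∧ C ≤ Cu ∧
      Rbar = η * (S : ℝ) + binEntropy2 η + (C - Real.logb 2 (Mu : ℝ)) / (2 * (Mu : ℝ)) := by
  obtain ⟨K, rfl⟩ := Nat.exists_eq_add_of_le hM.le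
  have hK : K ≠ 0 := by omega
  subst hI hRu hRbar hCd hCu
  push_cast at hη ⊢
  obtain ⟨h_lower, h_upper⟩ := logb_choose_add_mem_Icc hL.ne' hK hη
  set x := logb 2 ((Lu + K).choose Lu : ℝ)
  have h_floor_le := Int.floor_le x
  have h_lt_floor := Int.lt_floor_add_one x
  have h_const : logb 2 (π / (2 * exp 1 ^ 4)) = logb 2 (2 * π / exp 1 ^ 4) - 2 := by
    rw [show π / (2 * exp 1 ^ 4) = 2 * π / exp 1 ^ 4 / 2 ^ 2 by ring,
      logb_div (by positivity) (by positivity), logb_pow, logb_self_eq_one one_lt_two]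
    ring
  refine ⟨2 * (⌊x⌋ - (Lu + K) * binEntropy2 η) + logb 2 (Lu + K), ?_, ?_, ?_⟩
  · linarith
  · linarith
  · have hM_ne : (Lu : ℝ) + K ≠ 0 := by positivity
    rw [hη]
    field_simp
    ring
end

section
/- Let M_u and L_u be integers with 0 < L_u < M_u, set η = L_u/M_u and I = ⌊log₂ C(M_u, L_u)⌋. Then I_d < I ≤ I_u, where I_i = (C_i − log₂ M_u)/2 + M_u·H₂(η) for i ∈ {d, u}, with C_d = log₂(π/(2e⁴)) − log₂(η − η²) and C_u = log₂(e²/(4π²)) − log₂(η − η²). -/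
/-!
Stirling's bounds `√(2πn) (n/e)^n ≤ n! ≤ e √n (n/e)^n` (the upper one because the Stirling
sequence decreases from its value `e/√2` at `n = 1`) pin `log C(k + m, k)` down to
`(k+m) H(η) - ½ log ((k+m) η (1-η))` up to the additive constants `log(2π)/2 - 2` and
`1 - log(2π)`. In bits these are `½ log₂(e²/(4π²))` and exactly one more than `½ log₂(π/(2e⁴))`,
and that spare bit absorbs the loss from taking the floor.
-/

open Real

open scoped Nat

theorem Stirling.factorial_le_stirling_s4 {n : ℕ} (hn : n ≠ 0) :
    (n ! : ℝ) ≤ exp 1 * √n * (n / exp 1) ^ n := by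
  have hseq : stirlingSeq n ≤ exp 1 / √2 := by
    obtain ⟨m, rfl⟩ := Nat.exists_eq_succ_of_ne_zero hn
    simpa [stirlingSeq_one] using stirlingSeq'_antitone (Nat.zero_le m)
  have : exp 1 * √n * (n / exp 1) ^ n = exp 1 / √2 * (√(2 * n) * (n / exp 1) ^ n) := by
    rw [sqrt_mul' _ n.cast_nonneg]
    field_simp
  rwa [this, ← div_le_iff₀ (by positivity)]

theorem Stirling.log_factorial_le_stirling_s4 {n : ℕ} (hn : n ≠ 0) :
    log n ! ≤ n * log n - n + log n / 2 + 1 := by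
  calc
    _ ≤ log (exp 1 * √n * (n / exp 1) ^ n) :=
      log_le_log (by positivity) (factorial_le_stirling_s4 hn)
    _ = _ := by
      rw [log_mul (by positivity) (by positivity), log_mul (by positivity) (by positivity),
        log_sqrt (by positivity), log_pow, log_div (by positivity) (by positivity), log_exp]
      ring

noncomputable def logChooseMainTerm (k m : ℝ) : ℝ :=
  (k + m) * log (k + m) - k * log k - m * log m + (log (k + m) - log k - log m) / 2

lemma log_cast_add_choose (k m : ℕ) :
    log ((k + m).choose k : ℝ) = log (k + m)! - log k ! - log m ! := by
  rw [Nat.cast_add_choose, log_div (by positivity) (by positivity),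
    log_mul (by positivity) (by positivity)]
  ring

section
variable {k m : ℕ}

lemma logChooseMainTerm_add_le_log_choose (hk : k ≠ 0) (hm : m ≠ 0) :
    logChooseMainTerm k m + log (2 * π) / 2 - 2 ≤ log ((k + m).choose k : ℝ) := by
  have := Stirling.le_log_factorial_stirling (n := k + m) (by omega)
  have := Stirling.log_factorial_le_stirling_s4 hk
  have := Stirling.log_factorial_le_stirling_s4 hm
  rw [log_cast_add_choose, logChooseMainTerm]
  push_cast at *
  linarith

lemma log_choose_le_logChooseMainTerm_add (hk : k ≠ 0) (hm : m ≠ 0) :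
    log ((k + m).choose k : ℝ) ≤ logChooseMainTerm k m + 1 - log (2 * π) := by
  have := Stirling.log_factorial_le_stirling_s4 (n := k + m) (by omega)
  have := Stirling.le_log_factorial_stirling hk
  have := Stirling.le_log_factorial_stirling hm
  rw [log_cast_add_choose, logChooseMainTerm]
  push_cast at *
  linarith

end

lemma half_logb_add_mul_binEntropy2_eq {k m : ℝ} (hk : 0 < k) (hm : 0 < m) (c : ℝ) :
    (logb 2 c - logb 2 (k / (k + m) - (k / (k + m)) ^ 2) - logb 2 (k + m)) / 2 +
        (k + m) * binEntropy2 (k / (k + m)) =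
      (logChooseMainTerm k m + log c / 2) / log 2 := by
  have hn : 0 < k + m := by positivity
  have h1 : 1 - k / (k + m) = m / (k + m) := by field_simp; ring
  have h2 : k / (k + m) - (k / (k + m)) ^ 2 = k * m / (k + m) ^ 2 := by field_simp; ring
  rw [binEntropy2, h1, h2, logChooseMainTerm]
  simp only [logb, log_div hk.ne' hn.ne', log_div hm.ne' hn.ne',
    log_div (mul_pos hk hm).ne' (pow_pos hn 2).ne', log_mul hk.ne' hm.ne', log_pow]
  field_simp
  ring

/-- Bounds on the index-modulation rate `I = ⌊log₂ C(M_u, L_u)⌋`: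
`I_d < I ≤ I_u`, where `I_i = (C_i − log₂ M_u)/2 + M_u·H₂(η)` for `i ∈ {d,u}`,
`C_d = log₂(π/(2e⁴)) − log₂(η − η²)` and `C_u = log₂(e²/(4π²)) − log₂(η − η²)`. -/
theorem index_rate_bounds (Mu Lu : ℕ) (hL : 0 < Lu) (hM : Lu < Mu)
    (η : ℝ) (hη : η = (Lu : ℝ) / (Mu : ℝ))
    (I : ℤ) (hI : I = ⌊Real.logb 2 ((Mu.choose Lu : ℕ) : ℝ)⌋)
    (Cd Cu Id Iu : ℝ)
    (hCd : Cd = Real.logb 2 (Real.pi / (2 * Real.exp 1 ^ 4)) - Real.logb 2 (η - η ^ 2))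
    (hCu : Cu = Real.logb 2 (Real.exp 1 ^ 2 / (4 * Real.pi ^ 2)) - Real.logb 2 (η - η ^ 2))
    (hId : Id = (Cd - Real.logb 2 (Mu : ℝ)) / 2 + (Mu : ℝ) * binEntropy2 η)
    (hIu : Iu = (Cu - Real.logb 2 (Mu : ℝ)) / 2 + (Mu : ℝ) * binEntropy2 η) :
    Id < (I : ℝ) ∧ (I : ℝ) ≤ Iu := by
  obtain ⟨m, rfl⟩ := Nat.exists_eq_add_of_le hM.le
  subst hη hI hCd hCu hId hIu
  have hk : Lu ≠ 0 := hL.ne'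
  have hm : m ≠ 0 := by omega
  have hlog2 : 0 < log 2 := log_pos one_lt_two
  have hlog2π : log (2 * π) = log 2 + log π := log_mul two_ne_zero pi_ne_zero
  have hcd : log (π / (2 * exp 1 ^ 4)) = log π - log 2 - 4 := by
    rw [log_div pi_ne_zero (by positivity), log_mul two_ne_zero (by positivity), log_pow, log_exp]
    ring
  have hcu : log (exp 1 ^ 2 / (4 * π ^ 2)) = 2 - 2 * log 2 - 2 * log π := by
    rw [log_div (by positivity) (by positivity), log_mul four_ne_zero (by positivity), log_pow,
      log_pow, log_exp, show (4 : ℝ) = 2 ^ 2 by norm_num, log_pow]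
    ring
  have hlow := logChooseMainTerm_add_le_log_choose hk hm
  have hup := log_choose_le_logChooseMainTerm_add hk hm
  set x := logb 2 ((Lu + m).choose Lu : ℝ) with hx
  have hx_low : (logChooseMainTerm Lu m + log (π / (2 * exp 1 ^ 4)) / 2) / log 2 + 1 ≤ x := by
    rw [hx, logb, div_add_one hlog2.ne', div_le_div_iff_of_pos_right hlog2]
    linarith
  have hx_up : x ≤ (logChooseMainTerm Lu m + log (exp 1 ^ 2 / (4 * π ^ 2)) / 2) / log 2 := by
    rw [hx, logb, div_le_div_iff_of_pos_right hlog2]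
    linarith
  push_cast
  simp only [half_logb_add_mul_binEntropy2_eq (Nat.cast_pos.2 hL)
    (Nat.cast_pos.2 (Nat.pos_of_ne_zero hm))]
  exact ⟨by linarith [Int.sub_one_lt_floor x], by linarith [Int.floor_le x]⟩
end
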